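/- Let A, Ã ∈ S_{d,K}, y_i ∈ R^d with p_i := ‖(I − AAᵀ)y_i‖ > 0, E(M) := Σ_i ‖(I − MMᵀ)y_i‖, C_A := Σ_i y_iy_iᵀ/p_i, S_A := AᵀC_AA invertible, and Ã the polar factor of C_A A S_A^{−1}. Then E(Ã) − E(A) ≤ −Σ_{i=1}^N ‖ÃÃᵀy_i − AAᵀy_i‖² / (2 p_i). -/

import Mathlib

/-!
`P = AAᵀ` and `Q = ÃÃᵀ` are orthogonal projections. With `p_i = ‖(I - P)y_i‖` and
`q_i = ‖(I - Q)y_i‖`, expanding the squares gives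
`q_i² + ‖(Q - P)y_i‖² = p_i² + 2 y_iᵀ(P - QP)y_i`,
and the tangent-line bound for the square root gives `q_i - p_i ≤ (q_i² - p_i²) / (2p_i)`.
Summed with the weights `1/p_i`, the cross terms add up to `tr((P - QP)C_A)`, which vanishes:
`PC_A = A S_A Mᵀ` for `M = C_A A S_A⁻¹`, and `Q` fixes `M` because `Ã` is the polar factor
of `M`.
-/

open Matrix

section
open scoped ComplexOrder

noncomputable def Matrix.PosSemidef.sqrt {n 𝕜 : Type*} [Fintype n] [RCLike 𝕜] [DecidableEq n]
    {A : Matrix n n 𝕜} (hA : Matrix.PosSemidef A) : Matrix n n 𝕜 :=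
  hA.1.eigenvectorUnitary.1 * diagonal ((↑) ∘ (√·) ∘ hA.1.eigenvalues) *
  (star hA.1.eigenvectorUnitary : Matrix n n 𝕜)

end

noncomputable def evn {d : ℕ} (v : Fin d → ℝ) : ℝ := Real.sqrt (∑ i, (v i) ^ 2)

namespace Matrix.PosSemidef

open scoped ComplexOrder

variable {n 𝕜 : Type*} [Fintype n] [RCLike 𝕜] [DecidableEq n] {A : Matrix n n 𝕜}

lemma sqrt_isHermitian (hA : A.PosSemidef) : hA.sqrt.IsHermitian := by
  rw [PosSemidef.sqrt, star_eq_conjTranspose]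
  exact isHermitian_mul_mul_conjTranspose _ (isHermitian_diagonal_of_self_adjoint _
    (by ext i; simp))

lemma sqrt_mul_self (hA : A.PosSemidef) : hA.sqrt * hA.sqrt = A := by
  set U : Matrix n n 𝕜 := hA.1.eigenvectorUnitary.1
  have hU : (star hA.1.eigenvectorUnitary : Matrix n n 𝕜) * U = 1 :=
    Unitary.star_mul_self_of_mem hA.1.eigenvectorUnitary.2
  conv_rhs => rw [hA.1.spectral_theorem, Unitary.conjStarAlgAut_apply]
  calc hA.sqrt * hA.sqrt
      = U * (diagonal ((↑) ∘ (√·) ∘ hA.1.eigenvalues) *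
          ((star hA.1.eigenvectorUnitary : Matrix n n 𝕜) * U) *
          diagonal ((↑) ∘ (√·) ∘ hA.1.eigenvalues)) *
        (star hA.1.eigenvectorUnitary : Matrix n n 𝕜) := by
        simp only [PosSemidef.sqrt, Matrix.mul_assoc]; rfl
    _ = _ := by
        rw [hU, Matrix.mul_one, diagonal_mul_diagonal]
        congr 3
        ext i
        simp [← RCLike.ofReal_mul, Real.mul_self_sqrt (hA.eigenvalues_nonneg i)]

end Matrix.PosSemidef

namespace Matrix

variable {ι m n R : Type*} [Fintype n] [CommRing R]

lemma IsSymm.mulVec_dotProduct {P : Matrix n n R} (hP : P.IsSymm) (u v : n → R) :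
    P *ᵥ u ⬝ᵥ v = u ⬝ᵥ P *ᵥ v := by
  rw [dotProduct_mulVec, ← mulVec_transpose, hP.eq, dotProduct_comm]

lemma isSymm_mul_transpose (A : Matrix m n R) : (A * Aᵀ).IsSymm :=
  transpose_mul _ _

lemma dotProduct_sub_mulVec_self_add {P Q : Matrix n n R} (hP : P.IsSymm)
    (hP' : IsIdempotentElem P) (hQ : Q.IsSymm) (hQ' : IsIdempotentElem Q) (u : n → R) :
    (u - Q *ᵥ u) ⬝ᵥ (u - Q *ᵥ u) + (Q *ᵥ u - P *ᵥ u) ⬝ᵥ (Q *ᵥ u - P *ᵥ u)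
      = (u - P *ᵥ u) ⬝ᵥ (u - P *ᵥ u) + 2 * (u ⬝ᵥ (P - Q * P) *ᵥ u) := by
  have hPQ : u ⬝ᵥ (P * Q) *ᵥ u = u ⬝ᵥ (Q * P) *ᵥ u := by
    rw [← mulVec_mulVec, ← hP.mulVec_dotProduct, dotProduct_comm, hQ.mulVec_dotProduct,
      mulVec_mulVec]
  simp only [dotProduct_sub, sub_dotProduct, sub_mulVec, hP.mulVec_dotProduct,
    hQ.mulVec_dotProduct, mulVec_mulVec, hP'.eq, hQ'.eq, hPQ]
  ring

lemma trace_mul_sum_smul_vecMulVec [Fintype ι] (X : Matrix n n R) (c : ι → R)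
    (y : ι → n → R) :
    trace (X * ∑ i, c i • vecMulVec (y i) (y i)) = ∑ i, c i * (y i ⬝ᵥ X *ᵥ y i) := by
  simp only [Matrix.mul_sum, trace_sum, Matrix.mul_smul, trace_smul, mul_vecMulVec,
    trace_vecMulVec, smul_eq_mul, dotProduct_comm (X *ᵥ _)]

variable [Fintype m]

lemma isIdempotentElem_mul_transpose [DecidableEq n] {A : Matrix m n R} (hA : Aᵀ * A = 1) :
    IsIdempotentElem (A * Aᵀ) := by
  rw [IsIdempotentElem, Matrix.mul_assoc, ← Matrix.mul_assoc Aᵀ, hA, Matrix.one_mul]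

lemma trace_mul_mul_transpose_of_mul_eq {Q : Matrix m m R} {M X : Matrix m n R} (hQ : Q.IsSymm)
    (hQM : Q * M = M) : trace (Q * (X * Mᵀ)) = trace (X * Mᵀ) := by
  rw [trace_mul_comm, Matrix.mul_assoc, ← hQ.eq, ← transpose_mul, hQM]

lemma mul_transpose_mul_eq [DecidableEq n] {A : Matrix m n R} {C : Matrix m m R} (hC : C.IsSymm)
    (hS : IsUnit (Aᵀ * C * A).det) :
    A * Aᵀ * C = A * (Aᵀ * C * A) * (C * A * (Aᵀ * C * A)⁻¹)ᵀ := by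
  have hSsymm : (Aᵀ * C * A)ᵀ = Aᵀ * C * A := by
    simp only [transpose_mul, transpose_transpose, hC.eq, Matrix.mul_assoc]
  rw [transpose_mul, transpose_nonsing_inv, hSsymm, transpose_mul, hC.eq]
  calc A * Aᵀ * C = A * ((Aᵀ * C * A) * (Aᵀ * C * A)⁻¹) * (Aᵀ * C) := by
        rw [mul_nonsing_inv _ hS, Matrix.mul_one, Matrix.mul_assoc]
    _ = _ := by simp only [Matrix.mul_assoc]

section PolarFactor

variable [DecidableEq n] {M : Matrix m n R} {H : Matrix n n R}

lemma transpose_mul_self_of_mul_nonsing_inv (hH : H.IsSymm) (hHH : H * H = Mᵀ * M)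
    (hdet : IsUnit H.det) : (M * H⁻¹)ᵀ * (M * H⁻¹) = 1 := by
  rw [transpose_mul, transpose_nonsing_inv, hH.eq]
  calc H⁻¹ * Mᵀ * (M * H⁻¹) = H⁻¹ * H * (H * H⁻¹) := by
        rw [Matrix.mul_assoc, ← Matrix.mul_assoc Mᵀ, ← hHH]
        simp only [Matrix.mul_assoc]
    _ = 1 := by rw [nonsing_inv_mul _ hdet, mul_nonsing_inv _ hdet, Matrix.one_mul]

lemma mul_transpose_mul_self_of_mul_nonsing_inv (hH : H.IsSymm) (hHH : H * H = Mᵀ * M)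
    (hdet : IsUnit H.det) : M * H⁻¹ * (M * H⁻¹)ᵀ * M = M := by
  rw [transpose_mul, transpose_nonsing_inv, hH.eq]
  calc M * H⁻¹ * (H⁻¹ * Mᵀ) * M = M * (H⁻¹ * (H⁻¹ * H) * H) := by
        simp only [Matrix.mul_assoc, hHH]
    _ = M := by rw [nonsing_inv_mul _ hdet, Matrix.mul_one, nonsing_inv_mul _ hdet, Matrix.mul_one]

end PolarFactor

end Matrix

section EuclideanNorm

variable {d : ℕ}

lemma evn_sq (v : Fin d → ℝ) : evn v ^ 2 = v ⬝ᵥ v := by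
  rw [evn, Real.sq_sqrt (Finset.sum_nonneg fun i _ => sq_nonneg _)]
  simp [dotProduct, sq]

lemma evn_nonneg (v : Fin d → ℝ) : 0 ≤ evn v := Real.sqrt_nonneg _

lemma evn_pos {v : Fin d → ℝ} (hv : v ≠ 0) : 0 < evn v := by
  obtain ⟨j, hj⟩ := Function.ne_iff.1 hv
  exact Real.sqrt_pos.2 <| Finset.sum_pos' (fun i _ => sq_nonneg _)
    ⟨j, Finset.mem_univ j, sq_pos_of_ne_zero hj⟩

end EuclideanNorm

section Descent

variable {d N : ℕ} {P Q : Matrix (Fin d) (Fin d) ℝ}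

lemma evn_sub_mulVec_sub_le (hP : P.IsSymm) (hP' : IsIdempotentElem P) (hQ : Q.IsSymm)
    (hQ' : IsIdempotentElem Q) {u : Fin d → ℝ} (hu : u - P *ᵥ u ≠ 0) :
    evn (u - Q *ᵥ u) - evn (u - P *ᵥ u)
      ≤ -(evn (Q *ᵥ u - P *ᵥ u) ^ 2 / (2 * evn (u - P *ᵥ u)))
        + (evn (u - P *ᵥ u))⁻¹ * (u ⬝ᵥ (P - Q * P) *ᵥ u) := by
  have hp := evn_pos hu
  have hq := evn_nonneg (u - Q *ᵥ u)
  have key := dotProduct_sub_mulVec_self_add hP hP' hQ hQ' u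
  simp only [← evn_sq] at key
  rw [← sub_nonneg]
  field_simp
  nlinarith [sq_nonneg (evn (u - Q *ᵥ u) - evn (u - P *ᵥ u))]

theorem sum_evn_sub_mulVec_sub_le (hP : P.IsSymm) (hP' : IsIdempotentElem P) (hQ : Q.IsSymm)
    (hQ' : IsIdempotentElem Q) {y : Fin N → Fin d → ℝ} (hy : ∀ i, y i - P *ᵥ y i ≠ 0)
    (htr : trace ((P - Q * P) *
      ∑ i, (evn (y i - P *ᵥ y i))⁻¹ • vecMulVec (y i) (y i)) = 0) :
    ∑ i, evn (y i - Q *ᵥ y i) - ∑ i, evn (y i - P *ᵥ y i)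
      ≤ -∑ i, evn (Q *ᵥ y i - P *ᵥ y i) ^ 2 / (2 * evn (y i - P *ᵥ y i)) := by
  rw [trace_mul_sum_smul_vecMulVec] at htr
  calc ∑ i, evn (y i - Q *ᵥ y i) - ∑ i, evn (y i - P *ᵥ y i)
      ≤ ∑ i, (-(evn (Q *ᵥ y i - P *ᵥ y i) ^ 2 / (2 * evn (y i - P *ᵥ y i)))
          + (evn (y i - P *ᵥ y i))⁻¹ * (y i ⬝ᵥ (P - Q * P) *ᵥ y i)) := by
        rw [← Finset.sum_sub_distrib]
        exact Finset.sum_le_sum fun i _ => evn_sub_mulVec_sub_le hP hP' hQ hQ' (hy i)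
    _ = _ := by rw [Finset.sum_add_distrib, htr, add_zero, Finset.sum_neg_distrib]

end Descent

theorem stmt15_general {d K N : ℕ} (A B : Matrix (Fin d) (Fin K) ℝ)
    (y : Fin N → Fin d → ℝ) (C : Matrix (Fin d) (Fin d) ℝ) (SA : Matrix (Fin K) (Fin K) ℝ)
    (hA : Aᵀ * A = 1)
    (hy : ∀ i, y i - A.mulVec (Aᵀ.mulVec (y i)) ≠ 0)
    (hC : C = ∑ i, (evn (y i - A.mulVec (Aᵀ.mulVec (y i))))⁻¹ • vecMulVec (y i) (y i))
    (hSA : SA = Aᵀ * C * A) (hSAinv : IsUnit SA)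
    (hM : ((C * A * SA⁻¹)ᵀ * (C * A * SA⁻¹)).PosDef)
    (hB : B = C * A * SA⁻¹ * (hM.posSemidef.sqrt)⁻¹) :
    (∑ i, evn (y i - B.mulVec (Bᵀ.mulVec (y i)))) - (∑ i, evn (y i - A.mulVec (Aᵀ.mulVec (y i))))
      ≤ -∑ i, evn (B.mulVec (Bᵀ.mulVec (y i)) - A.mulVec (Aᵀ.mulVec (y i))) ^ 2
            / (2 * evn (y i - A.mulVec (Aᵀ.mulVec (y i)))) := by
  subst hSA
  have hH : hM.posSemidef.sqrt.IsSymm := isHermitian_iff_isSymm.1 hM.posSemidef.sqrt_isHermitian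
  have hHdet : IsUnit hM.posSemidef.sqrt.det := by
    rw [isUnit_iff_ne_zero, ← pow_ne_zero_iff two_ne_zero, sq, ← det_mul,
      hM.posSemidef.sqrt_mul_self]
    exact hM.det_pos.ne'
  have hBB : Bᵀ * B = 1 :=
    hB ▸ transpose_mul_self_of_mul_nonsing_inv hH hM.posSemidef.sqrt_mul_self hHdet
  have hBBM : B * Bᵀ * (C * A * (Aᵀ * C * A)⁻¹) = C * A * (Aᵀ * C * A)⁻¹ :=
    hB ▸ mul_transpose_mul_self_of_mul_nonsing_inv hH hM.posSemidef.sqrt_mul_self hHdet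
  have hCsymm : C.IsSymm := by
    rw [hC, IsSymm, transpose_sum]
    simp only [transpose_smul, transpose_vecMulVec]
  have htr : trace ((A * Aᵀ - B * Bᵀ * (A * Aᵀ)) * C) = 0 := by
    rw [sub_mul, trace_sub, Matrix.mul_assoc (B * Bᵀ),
      mul_transpose_mul_eq hCsymm ((isUnit_iff_isUnit_det _).1 hSAinv)]
    exact sub_eq_zero.2 (trace_mul_mul_transpose_of_mul_eq (isSymm_mul_transpose B) hBBM).symm
  simp only [mulVec_mulVec] at hy hC htr ⊢
  rw [hC] at htr
  exact sum_evn_sub_mulVec_sub_le (isSymm_mul_transpose A)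
    (isIdempotentElem_mul_transpose hA) (isSymm_mul_transpose B)
    (isIdempotentElem_mul_transpose hBB) hy htr

/-- Sufficient decrease of the gradient-descent step of rotational invariant L1-norm PCA:
with `B` the polar factor of `C_A A S_A⁻¹`, one has
`E(B) - E(A) ≤ -∑ i ‖B Bᵀ y_i - A Aᵀ y_i‖² / (2 ‖(I - A Aᵀ) y_i‖)`. -/
theorem stmt15 {d K N : ℕ} (A B : Matrix (Fin d) (Fin K) ℝ)
    (y : Fin N → Fin d → ℝ) (C S : Matrix (Fin d) (Fin d) ℝ) (SA : Matrix (Fin K) (Fin K) ℝ)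
    (hA : Aᵀ * A = 1)
    (hy : ∀ i, y i - A.mulVec (Aᵀ.mulVec (y i)) ≠ 0)
    (hC : C = ∑ i, (evn (y i - A.mulVec (Aᵀ.mulVec (y i))))⁻¹ • vecMulVec (y i) (y i))
    (hSA : SA = Aᵀ * C * A) (hSAinv : IsUnit SA)
    (hM : ((C * A * SA⁻¹)ᵀ * (C * A * SA⁻¹)).PosDef)
    (hB : B = C * A * SA⁻¹ * (hM.posSemidef.sqrt)⁻¹) :
    (∑ i, evn (y i - B.mulVec (Bᵀ.mulVec (y i)))) - (∑ i, evn (y i - A.mulVec (Aᵀ.mulVec (y i))))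
      ≤ -∑ i, evn (B.mulVec (Bᵀ.mulVec (y i)) - A.mulVec (Aᵀ.mulVec (y i))) ^ 2
            / (2 * evn (y i - A.mulVec (Aᵀ.mulVec (y i)))) :=
  stmt15_general A B y C SA hA hy hC hSA hSAinv hM hB
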